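/- arXiv:2106.14770 — 4 statements merged into one kernel-verified Lean document; each statement's English description precedes it below -/
import Mathlib

section
/- For all positive integers m and n, the infinite series sum over i >= 1 of (-1)^(m(i-1)) / (L_{m(i-1)+n} * L_{m(i+1)+n}) converges to (1/(5 * F_n * F_{2m})) * (2/L_n + L_m/L_{m+n} - 2/Φ^n), where Φ = (1+√5)/2. -/
def lucas : ℕ → ℕ
  | 0 => 2
  | 1 => 1
  | n + 2 => lucas (n + 1) + lucas n

/-!
Write `L_k = φ^k + ψ^k`, `√5 F_k = φ^k - ψ^k` and `φψ = -1`. Then `g k := ψ^k / L_k` satisfies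
`g k - g (k + a) = (-1)^k √5 F_a / (L_k L_{k+a})`, so the series is, up to the factor
`(-1)^n / (√5 F_{2m})`, the sum of `g (m i + n) - g (m (i + 2) + n)`. Since `|g k| ≤ |ψ|^k`, this
sum converges absolutely and telescopes to `g n + g (m + n)`, which is the stated value.
-/

open Real goldenRatio

theorem lucas_pos : ∀ k, 0 < lucas k
  | 0 => by decide
  | 1 => by decide
  | k + 2 => Nat.add_pos_left (lucas_pos (k + 1)) _

theorem cast_lucas_ne_zero (k : ℕ) : (lucas k : ℝ) ≠ 0 :=
  Nat.cast_ne_zero.mpr (lucas_pos k).ne'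

theorem coe_lucas_eq : ∀ k, (lucas k : ℝ) = φ ^ k + ψ ^ k
  | 0 => by norm_num [lucas]
  | 1 => by simp [lucas]
  | k + 2 => by
    rw [lucas, Nat.cast_add, coe_lucas_eq (k + 1), coe_lucas_eq k]
    linear_combination (-φ ^ k) * goldenRatio_sq - ψ ^ k * goldenConj_sq

theorem sqrt_five_mul_fib (k : ℕ) : √5 * Nat.fib k = φ ^ k - ψ ^ k := by
  rw [coe_fib_eq, mul_div_cancel₀ _ (by positivity)]

theorem goldenConj_pow_div_lucas_sub (k a : ℕ) :
    ψ ^ k / lucas k - ψ ^ (k + a) / lucas (k + a) =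
      (-1) ^ k * √5 * Nat.fib a / (lucas k * lucas (k + a)) := by
  have hφψ : φ ^ k * ψ ^ k = (-1) ^ k := by rw [← mul_pow, goldenRatio_mul_goldenConj]
  rw [div_sub_div _ _ (cast_lucas_ne_zero k) (cast_lucas_ne_zero (k + a)), mul_assoc,
    sqrt_five_mul_fib, coe_lucas_eq, coe_lucas_eq]
  congr 1
  linear_combination (φ ^ a - ψ ^ a) * hφψ

theorem summable_goldenConj_pow_div_lucas : Summable fun k => ψ ^ k / lucas k := by
  refine .of_norm_bounded (summable_geometric_of_lt_one (abs_nonneg ψ) ?_) fun k => ?_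
  · rw [abs_lt]; exact ⟨neg_one_lt_goldenConj, goldenConj_neg.trans one_pos⟩
  · rw [norm_div, Real.norm_eq_abs, abs_pow]
    exact div_le_self (by positivity) (by exact_mod_cast lucas_pos k)

theorem hasSum_sub_nat_add_two {G : Type*} [AddCommGroup G] [TopologicalSpace G]
    [IsTopologicalAddGroup G] {f : ℕ → G} (hf : Summable f) :
    HasSum (fun i => f i - f (i + 2)) (f 0 + f 1) := by
  have h2 := (hasSum_nat_add_iff' 2).mpr hf.hasSum
  simpa [Finset.sum_range_succ] using hf.hasSum.sub h2

theorem two_div_lucas_add_lucas_div_lucas_sub (m n : ℕ) :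
    2 / (lucas n : ℝ) + lucas m / lucas (m + n) - 2 / φ ^ n =
      (-1) ^ n * √5 * Nat.fib n * (ψ ^ n / lucas n + ψ ^ (m + n) / lucas (m + n)) := by
  have hn : φ ^ n + ψ ^ n ≠ 0 := by
    rw [← coe_lucas_eq]; exact cast_lucas_ne_zero n
  have hmn : φ ^ n * φ ^ m + ψ ^ n * ψ ^ m ≠ 0 := by
    rw [← pow_add, ← pow_add, ← coe_lucas_eq]; exact cast_lucas_ne_zero (n + m)
  have hφ : φ ^ n ≠ 0 := pow_ne_zero _ goldenRatio_ne_zero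
  have hφψ : φ ^ n * ψ ^ n = (-1) ^ n := by rw [← mul_pow, goldenRatio_mul_goldenConj]
  have hε : ((-1 : ℝ) ^ n) ^ 2 = 1 := by rw [← pow_mul, pow_mul', neg_one_sq, one_pow]
  rw [mul_assoc _ √5, sqrt_five_mul_fib, add_comm m n, coe_lucas_eq n, coe_lucas_eq m,
    coe_lucas_eq (n + m), pow_add, pow_add]
  field_simp
  linear_combination (-(φ ^ n - ψ ^ n) * (φ ^ n * φ ^ m + ψ ^ n * ψ ^ m + (φ ^ n + ψ ^ n) * ψ ^ m)) *
    ((-1) ^ n * hφψ + hε)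

theorem neg_one_pow_div_lucas_mul_lucas (j n : ℕ) {a : ℕ} (ha : 0 < a) :
    (-1) ^ j / ((lucas (j + n) : ℝ) * lucas (j + n + a)) =
      (-1) ^ n / (√5 * Nat.fib a) *
        (ψ ^ (j + n) / lucas (j + n) - ψ ^ (j + n + a) / lucas (j + n + a)) := by
  have hfib : (Nat.fib a : ℝ) ≠ 0 := Nat.cast_ne_zero.mpr (Nat.fib_pos.mpr ha).ne'
  have hε : ((-1 : ℝ) ^ n) ^ 2 = 1 := by rw [← pow_mul, pow_mul', neg_one_sq, one_pow]
  have h₁ := cast_lucas_ne_zero (j + n)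
  have h₂ := cast_lucas_ne_zero (j + n + a)
  rw [goldenConj_pow_div_lucas_sub, pow_add]
  field_simp
  linear_combination -hε

theorem stmt_3 (m n : ℕ) (hm : 0 < m) (hn : 0 < n) :
    HasSum (fun i : ℕ =>
      (-1 : ℝ) ^ (m * i) /
        ((lucas (m * i + n) : ℝ) * (lucas (m * (i + 2) + n) : ℝ)))
      ((1 / (5 * (Nat.fib n : ℝ) * (Nat.fib (2 * m) : ℝ))) *
        (2 / (lucas n : ℝ) + (lucas m : ℝ) / (lucas (m + n) : ℝ)
          - 2 / ((1 + Real.sqrt 5) / 2) ^ n)) := by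
  have hinj : Function.Injective fun i => m * i + n := fun i j h => by
    simpa [hm.ne'] using h
  have hsum := (hasSum_sub_nat_add_two (summable_goldenConj_pow_div_lucas.comp_injective hinj)
    ).mul_left ((-1) ^ n / (√5 * Nat.fib (2 * m)))
  simp only [Function.comp_apply, mul_zero, mul_one, zero_add] at hsum
  rw [show ((1 + √5) / 2) ^ n = φ ^ n from rfl, two_div_lucas_add_lucas_div_lucas_sub]
  have hscalar : 1 / (5 * (Nat.fib n : ℝ) * Nat.fib (2 * m)) * ((-1) ^ n * √5 * Nat.fib n) =
      (-1) ^ n / (√5 * Nat.fib (2 * m)) := by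
    have hfib : (Nat.fib n : ℝ) ≠ 0 := Nat.cast_ne_zero.mpr (Nat.fib_pos.mpr hn).ne'
    field_simp
    exact Real.sq_sqrt (by norm_num)
  rw [← mul_assoc, hscalar]
  refine hsum.congr_fun fun i => ?_
  rw [show m * (i + 2) + n = m * i + n + 2 * m by ring]
  exact neg_one_pow_div_lucas_mul_lucas _ _ (by omega)
end

section
/- For every positive integer m, the infinite series sum over i >= 1 of (-1)^(m(i-1)) / (L_{m(i-1)} * L_{m(i+1)}) converges to (1/(5 * F_{2m})) * (2Φ - L_{m+1}/L_m - 1/2), where Φ = (1+√5)/2. -/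
open Real Filter Topology
open Nat (fib fib_add_two fib_pos fib_le_fib_succ)
open scoped goldenRatio

lemma lucas_add_two (n : ℕ) : lucas (n + 2) = lucas (n + 1) + lucas n := rfl

lemma lucas_add_fib : ∀ n, lucas n + fib n = 2 * fib (n + 1)
  | 0 => rfl
  | 1 => rfl
  | n + 2 => by
    have := lucas_add_fib n
    have := lucas_add_fib (n + 1)
    simp only [lucas_add_two, fib_add_two] at *
    omega

lemma cast_lucas_eq_fib {R : Type*} [Ring R] (n : ℕ) :
    (lucas n : R) = 2 * fib (n + 1) - fib n := by
  rw [eq_sub_iff_add_eq, ← Nat.cast_ofNat, ← Nat.cast_mul, ← lucas_add_fib, Nat.cast_add]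

lemma lucas_pos_s7 (n : ℕ) : 0 < lucas n := by
  have := lucas_add_fib n
  have := fib_le_fib_succ (n := n)
  have : 0 < fib (n + 1) := fib_pos.2 n.succ_pos
  omega

lemma two_mul_lucas_add_one (n : ℕ) : 2 * lucas (n + 1) = lucas n + 5 * fib n := by
  have := lucas_add_fib n
  have := lucas_add_fib (n + 1)
  have : fib (n + 1 + 1) = fib n + fib (n + 1) := fib_add_two
  omega

lemma goldenRatio_pow_le_two_mul_lucas : ∀ n, φ ^ n ≤ 2 * lucas n
  | 0 => by norm_num [lucas]
  | 1 => by norm_num [lucas]; linarith [goldenRatio_lt_two]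
  | n + 2 => by
    have := goldenRatio_pow_le_two_mul_lucas n
    have := goldenRatio_pow_le_two_mul_lucas (n + 1)
    rw [lucas_add_two, Nat.cast_add]
    linarith [goldenRatio_pow_sub_goldenRatio_pow n]

lemma summable_inv_lucas : Summable fun n => (lucas n : ℝ)⁻¹ := by
  refine Summable.of_nonneg_of_le (fun n => by positivity) (fun n => ?_)
    ((summable_geometric_of_lt_one (by positivity)
      (inv_lt_one_of_one_lt₀ one_lt_goldenRatio)).mul_left 2)
  rw [inv_pow, ← div_eq_mul_inv, le_div_iff₀ (by positivity),
    inv_mul_le_iff₀ (by exact_mod_cast lucas_pos_s7 n)]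
  linarith [goldenRatio_pow_le_two_mul_lucas n]

lemma summable_neg_one_pow_div_lucas_mul_lucas {m : ℕ} (hm : 0 < m) :
    Summable fun i : ℕ => (-1 : ℝ) ^ (m * i) / (lucas (m * i) * lucas (m * (i + 2))) := by
  refine (summable_inv_lucas.comp_injective (i := fun i => m * (i + 2)) fun a b h => ?_)
    |>.of_norm_bounded fun i => ?_
  · simpa [Nat.mul_left_cancel_iff hm] using h
  · have h1 : (1 : ℝ) ≤ lucas (m * i) := by exact_mod_cast lucas_pos_s7 _
    have h2 : (0 : ℝ) < lucas (m * (i + 2)) := by exact_mod_cast lucas_pos_s7 _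
    rw [norm_div, norm_pow, norm_neg, norm_one, one_pow, Real.norm_of_nonneg (by positivity),
      one_div]
    exact inv_anti₀ h2 (le_mul_of_one_le_left h2.le h1)

lemma fib_add_mul_fib_succ_sub {R : Type*} [CommRing R] :
    ∀ n k : ℕ, (fib (n + k) : R) * fib (n + 1) - fib (n + k + 1) * fib n = (-1) ^ n * fib k
  | 0, k => by simp
  | n + 1, k => by
    have := fib_add_mul_fib_succ_sub (R := R) n k
    rw [show n + 1 + k = n + k + 1 by omega, fib_add_two, fib_add_two]
    push_cast
    linear_combination -this

lemma fib_add_mul_lucas_sub {R : Type*} [CommRing R] (n k : ℕ) :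
    (fib (n + k) : R) * lucas n - fib n * lucas (n + k) = 2 * (-1) ^ n * fib k := by
  rw [cast_lucas_eq_fib, cast_lucas_eq_fib]
  linear_combination 2 * fib_add_mul_fib_succ_sub (R := R) n k

lemma fib_div_lucas_add_sub {K : Type*} [Field K] [CharZero K] (n k : ℕ) :
    (fib (n + k) : K) / lucas (n + k) - fib n / lucas n
      = 2 * fib k * ((-1) ^ n / (lucas n * lucas (n + k))) := by
  have := (lucas_pos_s7 n).ne'
  have := (lucas_pos_s7 (n + k)).ne'
  field_simp
  linear_combination fib_add_mul_lucas_sub (R := K) n k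

lemma tendsto_fib_div_lucas_atTop :
    Tendsto (fun n => (fib n : ℝ) / lucas n) atTop (𝓝 (√5)⁻¹) := by
  have hratio (n : ℕ) :
      (fib n : ℝ) / lucas n = fib n / fib (n + 1) / (2 - fib n / fib (n + 1)) := by
    have : (0 : ℝ) < fib (n + 1) := by exact_mod_cast fib_pos.2 n.succ_pos
    rw [cast_lucas_eq_fib]
    field_simp
  have hψ : 2 - -ψ ≠ 0 := by linarith [neg_one_lt_goldenConj]
  have hlim : -ψ / (2 - -ψ) = (√5)⁻¹ := by
    rw [div_eq_iff hψ, goldenConj]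
    field_simp
    linear_combination sq_sqrt (show (0 : ℝ) ≤ 5 by norm_num)
  rw [funext hratio, ← hlim]
  exact tendsto_fib_div_fib_succ_atTop.div
    (tendsto_const_nhds.sub tendsto_fib_div_fib_succ_atTop) hψ

lemma two_mul_inv_sqrt_five_sub_fib_div_lucas (n : ℕ) :
    2 * (√5)⁻¹ - fib n / lucas n
      = 2 / 5 * (2 * ((1 + √5) / 2) - lucas (n + 1) / lucas n - 1 / 2) := by
  have hL : (lucas n : ℝ) ≠ 0 := by exact_mod_cast (lucas_pos_s7 n).ne'
  have hlucas : (2 * lucas (n + 1) : ℝ) = lucas n + 5 * fib n := by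
    exact_mod_cast two_mul_lucas_add_one n
  field_simp
  linear_combination √5 * hlucas - 2 * (lucas n : ℝ) * sq_sqrt (show (0 : ℝ) ≤ 5 by norm_num)

lemma Summable.hasSum_of_telescoping {G : Type*} [AddCommGroup G] [TopologicalSpace G]
    [IsTopologicalAddGroup G] [T2Space G] {f g : ℕ → G} {l : G} (hf : Summable f)
    (hfg : ∀ i, f i = g (i + 1) - g i) (hg : Tendsto g atTop (𝓝 l)) : HasSum f (l - g 0) := by
  rw [hf.hasSum_iff_tendsto_nat]
  simp_rw [hfg, Finset.sum_range_sub]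
  exact hg.sub_const _

theorem stmt_7 (m : ℕ) (hm : 0 < m) :
    HasSum (fun i : ℕ =>
      (-1 : ℝ) ^ (m * i) /
        ((lucas (m * i) : ℝ) * (lucas (m * (i + 2)) : ℝ)))
      ((1 / (5 * (Nat.fib (2 * m) : ℝ))) *
        (2 * ((1 + Real.sqrt 5) / 2) - (lucas (m + 1) : ℝ) / (lucas m : ℝ) - 1 / 2)) := by
  have hF : (fib (2 * m) : ℝ) ≠ 0 := by exact_mod_cast (fib_pos.2 (by omega)).ne'
  set v : ℕ → ℝ := fun n => fib n / lucas n
  set g : ℕ → ℝ := fun i => (v (m * (i + 1)) + v (m * i)) / (2 * fib (2 * m))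
  have hstep (i : ℕ) : (-1 : ℝ) ^ (m * i) / ((lucas (m * i) : ℝ) * (lucas (m * (i + 2)) : ℝ))
      = g (i + 1) - g i := by
    have : g (i + 1) - g i = (v (m * i + 2 * m) - v (m * i)) / (2 * fib (2 * m)) := by
      simp only [g, show m * (i + 1 + 1) = m * i + 2 * m by ring]
      ring
    rw [this, fib_div_lucas_add_sub, show m * (i + 2) = m * i + 2 * m by ring]
    field_simp
  have hmul : Tendsto (fun i => m * i) atTop atTop := (strictMono_mul_left_of_pos hm).tendsto_atTop
  have hg : Tendsto g atTop (𝓝 (((√5)⁻¹ + (√5)⁻¹) / (2 * fib (2 * m)))) :=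
    ((tendsto_fib_div_lucas_atTop.comp (hmul.comp (tendsto_add_atTop_nat 1))).add
      (tendsto_fib_div_lucas_atTop.comp hmul)).div_const _
  have hval : ((√5)⁻¹ + (√5)⁻¹) / (2 * fib (2 * m)) - g 0
      = 1 / (5 * (fib (2 * m) : ℝ)) * (2 * ((1 + √5) / 2) - lucas (m + 1) / lucas m - 1 / 2) := by
    simp only [g, v, zero_add, mul_zero, mul_one, Nat.fib_zero, Nat.cast_zero, zero_div, add_zero,
      ← sub_div, ← two_mul, two_mul_inv_sqrt_five_sub_fib_div_lucas]
    ring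
  rw [← hval]
  exact (summable_neg_one_pow_div_lucas_mul_lucas hm).hasSum_of_telescoping hstep hg
end

section
/- For all positive integers m and n, the infinite series sum over i >= 1 of 1/(F_{m(2i-1)+n} * F_{m(2i+1)+n}) converges to ((-1)^m / (F_n * F_{2m})) * (1/Φ^n - F_m/F_{m+n}), where Φ = (1+√5)/2. -/
/-!
With `c a = F_a / F_{a+m}`, Vajda's identity gives
`c a - c (a + 2m) = (-1)^(a+1) F_m F_{2m} / (F_{a+m} F_{a+3m})`, so for `a = 2mi + n` (which has the
parity of `n`) the series telescopes; since `c a → φ^{-m}`, its sum is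
`(-1)^(n+1) / (F_m F_{2m}) * (F_n / F_{m+n} - φ^{-m})`. By Binet's formula and `φψ = -1`,
`(-1)^(n+1) / F_m * (F_n / F_{m+n} - φ^{-m}) = 1 / (φ^(m+n) F_{m+n})`, which is symmetric in
`m` and `n`; exchanging them turns the sum into the stated closed form.
-/

open Real Filter Finset
open Nat (fib)
open scoped goldenRatio Topology

theorem fib_add_sub_goldenRatio_pow_mul_fib (m n : ℕ) :
    (fib (m + n) : ℝ) - φ ^ m * fib n = ψ ^ n * fib m := by
  simp only [coe_fib_eq, pow_add]
  field_simp
  ring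

/-- Vajda's identity. -/
theorem fib_add_mul_fib_add_sub_fib_mul_fib_add_add (a i j : ℕ) :
    (fib (a + i) * fib (a + j) - fib a * fib (a + i + j) : ℝ) = (-1) ^ a * fib i * fib j := by
  rw [← goldenRatio_mul_goldenConj, mul_pow]
  simp only [coe_fib_eq, pow_add]
  field_simp
  ring

theorem tendsto_fib_add_div_fib_atTop (m : ℕ) :
    Tendsto (fun a ↦ (fib (a + m) / fib a : ℝ)) atTop (𝓝 (φ ^ m)) := by
  induction m with
  | zero =>
    refine tendsto_const_nhds.congr' ?_
    filter_upwards [eventually_ne_atTop 0] with a ha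
    simp [ha]
  | succ m ih =>
    rw [pow_succ']
    refine ((tendsto_fib_succ_div_fib_atTop.comp (tendsto_add_atTop_nat m)).mul ih).congr' ?_
    filter_upwards [eventually_ne_atTop 0] with a ha
    have : (fib (a + m) : ℝ) ≠ 0 := by simp [ha]
    simp only [Function.comp_apply, ← add_assoc]
    field_simp

theorem tendsto_fib_div_fib_add_atTop (m : ℕ) :
    Tendsto (fun a ↦ (fib a / fib (a + m) : ℝ)) atTop (𝓝 (1 / φ ^ m)) := by
  simpa only [inv_div, one_div] using
    (tendsto_fib_add_div_fib_atTop m).inv₀ (pow_ne_zero m goldenRatio_ne_zero)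

theorem fib_div_fib_add_sub_fib_div_fib_add {a m : ℕ} (h : 0 < a + m) :
    (fib a / fib (a + m) - fib (a + 2 * m) / fib (a + 3 * m) : ℝ)
      = (-1) ^ (a + 1) * fib m * fib (2 * m) / (fib (a + m) * fib (a + 3 * m)) := by
  have vajda := fib_add_mul_fib_add_sub_fib_mul_fib_add_add a m (2 * m)
  rw [show a + m + 2 * m = a + 3 * m by ring] at vajda
  rw [div_sub_div _ _ (by simp; omega) (by simp; omega)]
  congr 1
  linear_combination -vajda

theorem hasSum_one_div_fib_mul_fib {m : ℕ} (hm : 0 < m) (n : ℕ) :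
    HasSum (fun i : ℕ ↦ 1 / ((fib (m * (2 * i + 1) + n) : ℝ) * fib (m * (2 * i + 3) + n)))
      ((-1) ^ (n + 1) / (fib m * fib (2 * m)) * (fib n / fib (m + n) - 1 / φ ^ m)) := by
  set c : ℕ → ℝ := fun i ↦ fib (2 * m * i + n) / fib (2 * m * i + n + m)
  have hterm (i : ℕ) : 1 / ((fib (m * (2 * i + 1) + n) : ℝ) * fib (m * (2 * i + 3) + n))
      = (-1) ^ (n + 1) / (fib m * fib (2 * m)) * (c i - c (i + 1)) := by
    have hsign : (-1 : ℝ) ^ (2 * m * i + n + 1) = (-1) ^ (n + 1) := by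
      rw [add_assoc, pow_add, pow_mul]; norm_num
    have hdiff := fib_div_fib_add_sub_fib_div_fib_add (a := 2 * m * i + n) (m := m) (by positivity)
    rw [hsign] at hdiff
    have e₁ : m * (2 * i + 1) + n = 2 * m * i + n + m := by ring
    have e₂ : m * (2 * i + 3) + n = 2 * m * i + n + 3 * m := by ring
    have e₃ : 2 * m * (i + 1) + n + m = 2 * m * i + n + 3 * m := by ring
    have e₄ : 2 * m * (i + 1) + n = 2 * m * i + n + 2 * m := by ring
    simp only [c]
    rw [e₁, e₂, e₃, e₄, hdiff]
    have : (fib m : ℝ) ≠ 0 := by simp; omega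
    have : (fib (2 * m) : ℝ) ≠ 0 := by simp; omega
    field_simp
    rw [← pow_mul, pow_mul', neg_one_sq, one_pow]
  have hc : Tendsto c atTop (𝓝 (1 / φ ^ m)) :=
    (tendsto_fib_div_fib_add_atTop m).comp <|
      tendsto_atTop_mono (fun i ↦ show i ≤ 2 * m * i + n by nlinarith) tendsto_id
  rw [hasSum_iff_tendsto_nat_of_nonneg (fun i ↦ by positivity)]
  simp_rw [hterm, ← mul_sum, sum_range_sub']
  simpa [c, add_comm n m] using (tendsto_const_nhds.sub hc).const_mul _

theorem neg_one_pow_succ_div_fib_mul_sub {m : ℕ} (hm : 0 < m) (n : ℕ) :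
    (-1) ^ (n + 1) / fib m * (fib n / fib (m + n) - 1 / φ ^ m : ℝ)
      = 1 / (φ ^ (m + n) * fib (m + n)) := by
  have key := fib_add_sub_goldenRatio_pow_mul_fib m n
  have : (fib m : ℝ) ≠ 0 := by simp; omega
  have : (fib (m + n) : ℝ) ≠ 0 := by simp; omega
  have hφ : (φ ^ m : ℝ) ≠ 0 := pow_ne_zero m goldenRatio_ne_zero
  calc (-1) ^ (n + 1) / fib m * (fib n / fib (m + n) - 1 / φ ^ m : ℝ)
      = (-1) ^ (n + 1) / fib m * ((fib n * φ ^ m - fib (m + n)) / (φ ^ m * fib (m + n))) := by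
        field_simp
    _ = (-1 * ψ) ^ n / (φ ^ m * fib (m + n)) := by
        rw [show (fib n * φ ^ m - fib (m + n) : ℝ) = -(ψ ^ n * fib m) by linarith, mul_pow]
        field_simp
        ring
    _ = 1 / (φ ^ (m + n) * fib (m + n)) := by
        rw [show -1 * ψ = φ⁻¹ by rw [inv_goldenRatio]; ring, inv_pow, pow_add]
        have : (φ ^ n : ℝ) ≠ 0 := pow_ne_zero n goldenRatio_ne_zero
        field_simp

theorem stmt_8 (m n : ℕ) (hm : 0 < m) (hn : 0 < n) :
    HasSum (fun i : ℕ =>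
      1 / ((Nat.fib (m * (2 * i + 1) + n) : ℝ) * (Nat.fib (m * (2 * i + 3) + n) : ℝ)))
      (((-1 : ℝ) ^ m / ((Nat.fib n : ℝ) * (Nat.fib (2 * m) : ℝ))) *
        (1 / ((1 + Real.sqrt 5) / 2) ^ n - (Nat.fib m : ℝ) / (Nat.fib (m + n) : ℝ))) := by
  convert hasSum_one_div_fib_mul_fib hm n using 1
  have h₁ := neg_one_pow_succ_div_fib_mul_sub hm n
  have h₂ := neg_one_pow_succ_div_fib_mul_sub hn m
  rw [add_comm n m] at h₂
  calc _ = (-1) ^ (m + 1) / fib n * (fib m / fib (m + n) - 1 / φ ^ n) / fib (2 * m) := by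
        rw [goldenRatio.eq_def]; ring
    _ = _ := by rw [h₂, ← h₁]; ring
end

section
/- Let (u_k) and (v_k) be the Lucas sequences of the first and second kind for parameters p, q (rational, q ≠ 0). Then for all positive integers m, k, N, assuming the denominators v_{m(i-k)}, v_{m(i+k)} for 1 ≤ i ≤ N, v_{m(i+N-k)}, v_{m(i-k)} for 1 ≤ i ≤ 2k, and u_{2km} are nonzero, the sum over i from 1 to N of q^{m(i-k)} / (v_{m(i-k)} * v_{m(i+k)}) equals (1/(2 * u_{2km})) * the sum over i from 1 to 2k of (u_{m(i+N-k)}/v_{m(i+N-k)} - u_{m(i-k)}/v_{m(i-k)}). -/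
/-!
The Casoratian `u (n + 1) * v n - u n * v (n + 1)` is multiplied by `q` at each step, so it equals
`2 * q ^ n`. For fixed `a`, both sides of `u (a + c) * v a - u a * v (a + c) = 2 * q ^ a * u c` solve
the recurrence in `c` and agree at `c = 0, 1`, hence everywhere. With `a = m (i - k)` and
`c = 2 k m`, the `i`-th summand becomes `(F (i + k) - F (i - k)) / (2 u_{2km})` for
`F j = u_{mj} / v_{mj}`, and this sum telescopes with step `2 k`.
-/

open Finset

theorem sum_range_sub_shift_comm {M : Type*} [AddCommGroup M] (G : ℕ → M) (n m : ℕ) :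
    ∑ i ∈ range n, (G (i + m) - G i) = ∑ j ∈ range m, (G (j + n) - G j) := by
  calc ∑ i ∈ range n, (G (i + m) - G i)
      = ∑ i ∈ range n, ∑ j ∈ range m, (G (i + j + 1) - G (i + j)) :=
        sum_congr rfl fun i _ => (sum_range_sub (fun j => G (i + j)) m).symm
    _ = ∑ j ∈ range m, ∑ i ∈ range n, (G (i + 1 + j) - G (i + j)) := by
        rw [sum_comm]; simp only [add_right_comm]
    _ = ∑ j ∈ range m, (G (j + n) - G j) :=
        sum_congr rfl fun j _ => by rw [sum_range_sub (fun i => G (i + j)) n, add_comm, zero_add]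

theorem sum_Icc_sub_shift_comm {M : Type*} [AddCommGroup M] (F : ℤ → M) {n m : ℤ}
    (hn : 0 ≤ n) (hm : 0 ≤ m) :
    ∑ i ∈ Icc 1 n, (F (i + m) - F i) = ∑ j ∈ Icc 1 m, (F (j + n) - F j) := by
  lift n to ℕ using hn
  lift m to ℕ using hm
  simp only [Int.Icc_eq_finset_map, sum_map, add_sub_cancel_right, Int.toNat_natCast]
  simpa [add_assoc] using sum_range_sub_shift_comm (fun j : ℕ => F (1 + j)) n m

def IsLucasRec {K : Type*} [Field K] (p q : K) (f : ℤ → K) : Prop :=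
  ∀ n, f (n + 2) = p * f (n + 1) - q * f n

namespace IsLucasRec

variable {K : Type*} [Field K] {p q : K} {f g : ℤ → K}

theorem comp_add_left (hf : IsLucasRec p q f) (a : ℤ) : IsLucasRec p q (fun n => f (a + n)) :=
  fun n => by simpa only [add_assoc] using hf (a + n)

theorem ext (hq : q ≠ 0) (hf : IsLucasRec p q f) (hg : IsLucasRec p q g)
    (h0 : f 0 = g 0) (h1 : f 1 = g 1) : f = g := by
  suffices h : ∀ n, f n = g n ∧ f (n + 1) = g (n + 1) from funext fun n => (h n).1
  intro n
  induction n using Int.induction_on with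
  | zero => exact ⟨h0, h1⟩
  | succ n ih => exact ⟨ih.2, by rw [add_assoc, one_add_one_eq_two, hf, hg, ih.1, ih.2]⟩
  | pred n ih =>
    refine ⟨?_, by rw [sub_add_cancel]; exact ih.1⟩
    have hfn := hf (-n - 1)
    have hgn := hg (-n - 1)
    rw [show -(n : ℤ) - 1 + 2 = -n + 1 by ring, sub_add_cancel, ih.1, ih.2] at hfn
    rw [show -(n : ℤ) - 1 + 2 = -n + 1 by ring, sub_add_cancel] at hgn
    exact mul_left_cancel₀ hq (by linear_combination hfn - hgn)

theorem casoratian (hq : q ≠ 0) (hf : IsLucasRec p q f) (hg : IsLucasRec p q g) (n : ℤ) :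
    f (n + 1) * g n - f n * g (n + 1) = q ^ n * (f 1 * g 0 - f 0 * g 1) := by
  have step : ∀ n, f (n + 1 + 1) * g (n + 1) - f (n + 1) * g (n + 1 + 1)
      = q * (f (n + 1) * g n - f n * g (n + 1)) := fun n => by
    rw [add_assoc, one_add_one_eq_two, hf, hg]; ring
  induction n using Int.induction_on with
  | zero => simp
  | succ n ih => rw [step, ih, zpow_add_one₀ hq]; ring
  | pred n ih =>
    have h := step (-n - 1)
    rw [sub_add_cancel, ih] at h
    rw [sub_add_cancel, zpow_sub_one₀ hq]
    field_simp
    linear_combination -h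

theorem casoratian_add {u : ℤ → K} (hq : q ≠ 0) (hf : IsLucasRec p q f) (hg : IsLucasRec p q g)
    (hu : IsLucasRec p q u) (hu0 : u 0 = 0) (hu1 : u 1 = 1) (a c : ℤ) :
    f (a + c) * g a - f a * g (a + c) = q ^ a * (f 1 * g 0 - f 0 * g 1) * u c := by
  have hrec : IsLucasRec p q (fun c => f (a + c) * g a - f a * g (a + c)) := fun n => by
    simp only [hf.comp_add_left a n, hg.comp_add_left a n]; ring
  have hrec' : IsLucasRec p q (fun c => q ^ a * (f 1 * g 0 - f 0 * g 1) * u c) := fun n => by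
    simp only [hu n]; ring
  refine congrFun (ext hq hrec hrec' ?_ ?_) c
  · simp [hu0]
  · simp only [hu1, mul_one]
    rw [← casoratian hq hf hg a]

end IsLucasRec

theorem stmt_19_general (p q : ℚ) (hq : q ≠ 0)
    (u v : ℤ → ℚ)
    (hu0 : u 0 = 0) (hu1 : u 1 = 1) (hv0 : v 0 = 2)
    (hurec : ∀ k : ℤ, u (k + 2) = p * u (k + 1) - q * u k)
    (hvrec : ∀ k : ℤ, v (k + 2) = p * v (k + 1) - q * v k)
    (m k N : ℤ) (hk : 0 < k) (hN : 0 < N)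
    (hden1 : ∀ i ∈ Finset.Icc (1 : ℤ) N, v (m * (i - k)) ≠ 0 ∧ v (m * (i + k)) ≠ 0)
    (hden3 : u (2 * k * m) ≠ 0) :
    ∑ i ∈ Finset.Icc (1 : ℤ) N, q ^ (m * (i - k)) / (v (m * (i - k)) * v (m * (i + k)))
      = (1 / (2 * u (2 * k * m))) *
          ∑ i ∈ Finset.Icc (1 : ℤ) (2 * k),
            (u (m * (i + N - k)) / v (m * (i + N - k)) - u (m * (i - k)) / v (m * (i - k))) := by
  set F : ℤ → ℚ := fun j => u (m * (j - k)) / v (m * (j - k))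
  have term : ∀ i ∈ Icc (1 : ℤ) N, q ^ (m * (i - k)) / (v (m * (i - k)) * v (m * (i + k)))
      = 1 / (2 * u (2 * k * m)) * (F (i + 2 * k) - F i) := by
    intro i hi
    obtain ⟨hva, hvb⟩ := hden1 i hi
    have hcross := IsLucasRec.casoratian_add hq hurec hvrec hurec hu0 hu1 (m * (i - k)) (2 * k * m)
    rw [show m * (i - k) + 2 * k * m = m * (i + k) by ring, hu0, hu1, hv0] at hcross
    simp only [F, show i + 2 * k - k = i + k by ring]
    field_simp
    linear_combination -hcross
  rw [sum_congr rfl term, ← mul_sum, sum_Icc_sub_shift_comm F hN.le (by positivity)]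

theorem stmt_19 (p q : ℚ) (hq : q ≠ 0)
    (u v : ℤ → ℚ)
    (hu0 : u 0 = 0) (hu1 : u 1 = 1) (hv0 : v 0 = 2) (hv1 : v 1 = p)
    (hurec : ∀ k : ℤ, u (k + 2) = p * u (k + 1) - q * u k)
    (hvrec : ∀ k : ℤ, v (k + 2) = p * v (k + 1) - q * v k)
    (m k N : ℤ) (hm : 0 < m) (hk : 0 < k) (hN : 0 < N)
    (hden1 : ∀ i ∈ Finset.Icc (1 : ℤ) N, v (m * (i - k)) ≠ 0 ∧ v (m * (i + k)) ≠ 0)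
    (hden2 : ∀ i ∈ Finset.Icc (1 : ℤ) (2 * k),
        v (m * (i + N - k)) ≠ 0 ∧ v (m * (i - k)) ≠ 0)
    (hden3 : u (2 * k * m) ≠ 0) :
    ∑ i ∈ Finset.Icc (1 : ℤ) N, q ^ (m * (i - k)) / (v (m * (i - k)) * v (m * (i + k)))
      = (1 / (2 * u (2 * k * m))) *
          ∑ i ∈ Finset.Icc (1 : ℤ) (2 * k),
            (u (m * (i + N - k)) / v (m * (i + N - k)) - u (m * (i - k)) / v (m * (i - k))) :=
  stmt_19_general p q hq u v hu0 hu1 hv0 hurec hvrec m k N hk hN hden1 hden3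
end
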